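/- Let D be a Eulerian directed graph on n vertices with all degrees positive. For every 0 ≤ α ≤ 1, σ_α ≤ √(1 − 2α(1−α)λ_1), where λ_1 is the first non-trivial eigenvalue of the Laplacian of D. -/

import Mathlib

open Matrix Polynomial

noncomputable section

/-- The (out-)degree of a vertex in a directed graph with adjacency matrix `A`. -/
def ddeg {V : Type*} [Fintype V] (A : Matrix V V ℝ) (x : V) : ℝ := ∑ y, A x y

/-- The diagonal matrix `T^{-1/2}` of a directed graph. -/
def dInvSqrtT {V : Type*} [Fintype V] [DecidableEq V] (A : Matrix V V ℝ) : Matrix V V ℝ :=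
  Matrix.diagonal fun x => (Real.sqrt (ddeg A x))⁻¹

/-- The non-symmetric Laplacian `vecL = I - T^{-1/2} A T^{-1/2}` of a directed graph. -/
def dvecL {V : Type*} [Fintype V] [DecidableEq V] (A : Matrix V V ℝ) : Matrix V V ℝ :=
  1 - dInvSqrtT A * A * dInvSqrtT A

/-- The Laplacian `(vecL + vecLᵀ)/2` of a directed graph. -/
def dLap {V : Type*} [Fintype V] [DecidableEq V] (A : Matrix V V ℝ) : Matrix V V ℝ :=
  (1 / 2 : ℝ) • (dvecL A + (dvecL A)ᵀ)

/-- The matrix `L_α = I - (1-α) vecL = T^{1/2} P_α T^{-1/2}`. -/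
def dLalpha {V : Type*} [Fintype V] [DecidableEq V] (A : Matrix V V ℝ) (α : ℝ) :
    Matrix V V ℝ :=
  1 - (1 - α) • dvecL A

/-- The transition matrix `P_α = α I + (1-α) T⁻¹ A` of the α-lazy random walk. -/
def dTrans {V : Type*} [Fintype V] [DecidableEq V] (A : Matrix V V ℝ) (α : ℝ) :
    Matrix V V ℝ :=
  α • (1 : Matrix V V ℝ) + (1 - α) • ((Matrix.diagonal fun x => (ddeg A x)⁻¹) * A)

/-- The volume of a set of vertices of a directed graph. -/
def dvol {V : Type*} [Fintype V] (A : Matrix V V ℝ) (X : Finset V) : ℝ :=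
  ∑ x ∈ X, ddeg A x

/-- The unit vector `φ₀` with `φ₀(x) = √(d_x)/√(vol D)`. -/
def dphi {V : Type*} [Fintype V] (A : Matrix V V ℝ) : V → ℝ :=
  fun x => Real.sqrt (ddeg A x) / Real.sqrt (dvol A Finset.univ)

/-- Euclidean norm of a (row or column) vector. -/
def euclNorm {m : Type*} [Fintype m] (f : m → ℝ) : ℝ := Real.sqrt (∑ x, f x ^ 2)

/-- The set of values `‖L_α f‖ / ‖f‖` over nonzero vectors `f` orthogonal to `φ₀ᵀ`;
its greatest element is the second largest singular value `σ_α` of `L_α`. -/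
def sigmaSet {V : Type*} [Fintype V] [DecidableEq V] (A : Matrix V V ℝ) (α : ℝ) : Set ℝ :=
  {r | ∃ f : V → ℝ, f ≠ 0 ∧ (∑ x, f x * dphi A x) = 0 ∧
    r = euclNorm (dLalpha A α *ᵥ f) / euclNorm f}

/-- `μ` lists the eigenvalues of the square matrix `M` (with multiplicity)
in non-decreasing order. -/
def IsEigenSeq {m : Type*} [Fintype m] [DecidableEq m] (M : Matrix m m ℝ) {n : ℕ}
    (μ : Fin n → ℝ) : Prop :=
  Monotone μ ∧ M.charpoly = ∏ i, (X - C (μ i))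

/-! With `N = T^{-1/2} A T^{-1/2}` one has `L_α f = α f + (1-α) N f` and
`⟨f, N f⟩ = ‖f‖² - ⟨f, L f⟩`. Eulerianity and a weighted Cauchy–Schwarz inequality make `N` a
contraction, so `L` is positive semidefinite with `L φ₀ = 0`; the eigenbasis of `L` then gives
`⟨f, L f⟩ ≥ λ₁ ‖f‖²` for `f ⊥ φ₀`. Expanding,
`‖L_α f‖² ≤ (α² + 2α(1-α)(1-λ₁) + (1-α)²) ‖f‖² = (1 - 2α(1-α)λ₁) ‖f‖²`. -/

section Spectral

variable {V : Type*} [Fintype V] [DecidableEq V] {L : Matrix V V ℝ}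

namespace Matrix.IsHermitian

variable (hL : L.IsHermitian)

lemma sum_eigenvectorBasis_dotProduct_mul (f g : V → ℝ) :
    ∑ i, (⇑(hL.eigenvectorBasis i) ⬝ᵥ f) * (⇑(hL.eigenvectorBasis i) ⬝ᵥ g) = f ⬝ᵥ g := by
  have := hL.eigenvectorBasis.sum_inner_mul_inner (WithLp.toLp 2 f) (WithLp.toLp 2 g)
  simp only [EuclideanSpace.inner_eq_star_dotProduct, star_trivial] at this
  simpa [dotProduct_comm] using this

lemma eigenvectorBasis_dotProduct_mulVec (i : V) (f : V → ℝ) :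
    ⇑(hL.eigenvectorBasis i) ⬝ᵥ (L *ᵥ f) = hL.eigenvalues i * (⇑(hL.eigenvectorBasis i) ⬝ᵥ f) := by
  rw [dotProduct_mulVec, ← mulVec_transpose, ← conjTranspose_eq_transpose_of_trivial, hL.eq,
    mulVec_eigenvectorBasis, smul_dotProduct, smul_eq_mul]

end Matrix.IsHermitian

namespace IsEigenSeq

lemma map_univ_eq {n : ℕ} {μ : Fin n → ℝ} (hμ : IsEigenSeq L μ) (hL : L.IsHermitian) :
    Finset.univ.val.map μ = Finset.univ.val.map hL.eigenvalues := by
  have h := hL.roots_charpoly_eq_eigenvalues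
  rw [hμ.2, Polynomial.roots_prod _ _ (Finset.prod_ne_zero_iff.mpr fun i _ => X_sub_C_ne_zero _)]
    at h
  simpa using h

lemma eq_of_eigenvalues_lt {n : ℕ} {μ : Fin n → ℝ} (hμ : IsEigenSeq L μ)
    (hL : L.IsHermitian) (h1 : 1 < n) {i j : V} (hi : hL.eigenvalues i < μ ⟨1, h1⟩)
    (hj : hL.eigenvalues j < μ ⟨1, h1⟩) : i = j := by
  have hcard : (Finset.univ.filter fun k => μ k < μ ⟨1, h1⟩).card ≤ 1 := by
    refine Finset.card_le_one.mpr fun k hk l hl => ?_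
    simp only [Finset.mem_filter, Finset.mem_univ, true_and] at hk hl
    have h0 : ∀ m : Fin n, μ m < μ ⟨1, h1⟩ → m.val = 0 := fun m hm => by
      by_contra hm0
      exact (hμ.1 (show (⟨1, h1⟩ : Fin n) ≤ m from Nat.one_le_iff_ne_zero.mpr hm0)).not_gt hm
    exact Fin.ext ((h0 k hk).trans (h0 l hl).symm)
  have hcount : (Finset.univ.filter fun k => hL.eigenvalues k < μ ⟨1, h1⟩).card
      = (Finset.univ.filter fun k => μ k < μ ⟨1, h1⟩).card := by
    rw [Finset.card_def, Finset.card_def, Finset.filter_val, Finset.filter_val,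
      ← Multiset.countP_map hL.eigenvalues _ (· < μ ⟨1, h1⟩),
      ← Multiset.countP_map μ _ (· < μ ⟨1, h1⟩), hμ.map_univ_eq hL]
  rw [← hcount] at hcard
  exact Finset.card_le_one.mp hcard i (by simpa using hi) j (by simpa using hj)

end IsEigenSeq

theorem Matrix.PosSemidef.eigenSeq_one_mul_dotProduct_self_le (hL : L.PosSemidef) {n : ℕ}
    {μ : Fin n → ℝ} (hμ : IsEigenSeq L μ) (h1 : 1 < n) {φ f : V → ℝ} (hφ : φ ≠ 0)
    (hLφ : L *ᵥ φ = 0) (hf : f ⬝ᵥ φ = 0) : μ ⟨1, h1⟩ * (f ⬝ᵥ f) ≤ f ⬝ᵥ (L *ᵥ f) := by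
  set H := hL.isHermitian
  set b := H.eigenvectorBasis
  set ev := H.eigenvalues
  set c : V → ℝ := fun i => ⇑(b i) ⬝ᵥ f
  set d : V → ℝ := fun i => ⇑(b i) ⬝ᵥ φ
  have hquad : f ⬝ᵥ (L *ᵥ f) = ∑ i, ev i * c i ^ 2 := by
    rw [← H.sum_eigenvectorBasis_dotProduct_mul]
    simp only [H.eigenvectorBasis_dotProduct_mulVec]
    exact Finset.sum_congr rfl fun i _ => by ring
  have hnorm : f ⬝ᵥ f = ∑ i, c i ^ 2 := by
    rw [← H.sum_eigenvectorBasis_dotProduct_mul]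
    exact Finset.sum_congr rfl fun i _ => (sq _).symm
  have horth : ∑ i, c i * d i = 0 := (H.sum_eigenvectorBasis_dotProduct_mul f φ).trans hf
  have hkernel : ∀ i, ev i * d i = 0 := fun i => by
    simpa [hLφ] using (H.eigenvectorBasis_dotProduct_mulVec i φ).symm
  obtain ⟨i₀, hi₀⟩ : ∃ i, d i ≠ 0 := by
    by_contra! hd
    refine hφ (dotProduct_self_eq_zero.mp ?_)
    rw [← H.sum_eigenvectorBasis_dotProduct_mul φ φ]
    exact Finset.sum_eq_zero fun i _ => mul_eq_zero_of_left (hd i) _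
  have hcoeff : ∀ i, μ ⟨1, h1⟩ * c i ^ 2 ≤ ev i * c i ^ 2 := by
    intro i
    rcases le_or_gt (μ ⟨1, h1⟩) (ev i) with hle | hlt
    · exact mul_le_mul_of_nonneg_right hle (sq_nonneg _)
    -- `i` is the only index with a small eigenvalue, so `φ` is a multiple of `b i`
    have hd : ∀ j ≠ i, d j = 0 := fun j hj => by
      have hpos : 0 < ev j := by
        refine (hL.eigenvalues_nonneg i).trans_lt (hlt.trans_le ?_)
        exact not_lt.mp fun hj' => hj (hμ.eq_of_eigenvalues_lt H h1 hj' hlt)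
      exact (mul_eq_zero.mp (hkernel j)).resolve_left hpos.ne'
    have hi : i₀ = i := by_contra fun h => hi₀ (hd i₀ h)
    rw [Finset.sum_eq_single i (fun j _ hj => by rw [hd j hj, mul_zero]) (by simp)] at horth
    rw [(mul_eq_zero.mp horth).resolve_right (hi ▸ hi₀)]
    simp
  rw [hquad, hnorm, Finset.mul_sum]
  exact Finset.sum_le_sum fun i _ => hcoeff i

end Spectral

section Digraph

variable {V : Type*} [Fintype V] {A : Matrix V V ℝ}

lemma ddeg_transpose (hEuler : ∀ x, (∑ y, A x y) = ∑ y, A y x) : ddeg Aᵀ = ddeg A :=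
  funext fun x => (hEuler x).symm

lemma dphi_eq_smul : dphi A = (√(dvol A Finset.univ))⁻¹ • fun x => √(ddeg A x) :=
  funext fun _ => div_eq_inv_mul _ _

lemma dphi_ne_zero [Nonempty V] (hdegpos : ∀ x, 0 < ddeg A x) : dphi A ≠ 0 := by
  have hvol : 0 < dvol A Finset.univ := Finset.sum_pos (fun x _ => hdegpos x) Finset.univ_nonempty
  obtain ⟨x⟩ := ‹Nonempty V›
  exact Function.ne_iff.mpr
    ⟨x, (div_pos (Real.sqrt_pos.mpr (hdegpos x)) (Real.sqrt_pos.mpr hvol)).ne'⟩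

lemma euclNorm_eq_sqrt_dotProduct (f : V → ℝ) : euclNorm f = √(f ⬝ᵥ f) := by
  simp only [euclNorm, dotProduct, sq]

variable [DecidableEq V]

def dNormAdj (A : Matrix V V ℝ) : Matrix V V ℝ := dInvSqrtT A * A * dInvSqrtT A

lemma dNormAdj_apply (x y : V) :
    dNormAdj A x y = (√(ddeg A x))⁻¹ * A x y * (√(ddeg A y))⁻¹ := by
  simp [dNormAdj, dInvSqrtT, mul_apply, diagonal_apply]

lemma dNormAdj_transpose (hEuler : ∀ x, (∑ y, A x y) = ∑ y, A y x) :
    (dNormAdj A)ᵀ = dNormAdj Aᵀ := by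
  simp only [dNormAdj, dInvSqrtT, transpose_mul, diagonal_transpose, ddeg_transpose hEuler,
    Matrix.mul_assoc]

lemma dNormAdj_mulVec_sqrt_ddeg (hdegpos : ∀ x, 0 < ddeg A x) :
    dNormAdj A *ᵥ (fun x => √(ddeg A x)) = fun x => √(ddeg A x) := by
  funext x
  have hterm : ∀ y, dNormAdj A x y * √(ddeg A y) = (√(ddeg A x))⁻¹ * A x y := fun y => by
    rw [dNormAdj_apply, mul_assoc, inv_mul_cancel₀ (Real.sqrt_pos.mpr (hdegpos y)).ne', mul_one]
  simp only [mulVec, dotProduct, hterm, ← Finset.mul_sum]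
  rw [inv_mul_eq_div]
  exact Real.div_sqrt

lemma sq_dNormAdj_mulVec_apply_le (hA : ∀ x y, 0 ≤ A x y) (hdegpos : ∀ x, 0 < ddeg A x)
    (f : V → ℝ) (x : V) :
    (dNormAdj A *ᵥ f) x ^ 2 ≤ ∑ y, A x y * (f y ^ 2 / ddeg A y) := by
  set g : V → ℝ := fun y => f y / √(ddeg A y)
  have hmulVec : (dNormAdj A *ᵥ f) x = (√(ddeg A x))⁻¹ * ∑ y, A x y * g y := by
    rw [Finset.mul_sum]
    refine Finset.sum_congr rfl fun y _ => ?_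
    simp only [dNormAdj_apply, g, div_eq_mul_inv]
    ring
  have hg : ∀ y, g y ^ 2 = f y ^ 2 / ddeg A y := fun y => by
    rw [div_pow, Real.sq_sqrt (hdegpos y).le]
  -- Cauchy–Schwarz with weights `A x ·`, whose total is `ddeg A x`
  have hCS : (∑ y, A x y * g y) ^ 2 ≤ ddeg A x * ∑ y, A x y * g y ^ 2 :=
    Finset.sum_sq_le_sum_mul_sum_of_sq_le_mul _ (fun y _ => hA x y)
      (fun y _ => mul_nonneg (hA x y) (sq_nonneg _)) fun y _ => by ring_nf; rfl
  rw [hmulVec, mul_pow, inv_pow, Real.sq_sqrt (hdegpos x).le, inv_mul_le_iff₀ (hdegpos x)]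
  simpa only [hg] using hCS

lemma dotProduct_self_dNormAdj_mulVec_le (hA : ∀ x y, 0 ≤ A x y)
    (hEuler : ∀ x, (∑ y, A x y) = ∑ y, A y x) (hdegpos : ∀ x, 0 < ddeg A x) (f : V → ℝ) :
    (dNormAdj A *ᵥ f) ⬝ᵥ (dNormAdj A *ᵥ f) ≤ f ⬝ᵥ f := by
  calc (dNormAdj A *ᵥ f) ⬝ᵥ (dNormAdj A *ᵥ f)
      = ∑ x, (dNormAdj A *ᵥ f) x ^ 2 := Finset.sum_congr rfl fun x _ => (sq _).symm
    _ ≤ ∑ x, ∑ y, A x y * (f y ^ 2 / ddeg A y) :=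
        Finset.sum_le_sum fun x _ => sq_dNormAdj_mulVec_apply_le hA hdegpos f x
    _ = ∑ y, ddeg A y * (f y ^ 2 / ddeg A y) := by
        rw [Finset.sum_comm]
        simp only [← Finset.sum_mul, ← hEuler]
        rfl
    _ = f ⬝ᵥ f := Finset.sum_congr rfl fun y _ => by
        rw [mul_div_cancel₀ _ (hdegpos y).ne', sq]

lemma dotProduct_dLap_mulVec (f : V → ℝ) :
    f ⬝ᵥ (dLap A *ᵥ f) = f ⬝ᵥ f - f ⬝ᵥ (dNormAdj A *ᵥ f) := by
  have htr : f ⬝ᵥ ((dvecL A)ᵀ *ᵥ f) = f ⬝ᵥ (dvecL A *ᵥ f) := by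
    rw [dotProduct_mulVec, vecMul_transpose, dotProduct_comm]
  rw [dLap, smul_mulVec, add_mulVec, dotProduct_smul, dotProduct_add, htr, dvecL, sub_mulVec,
    one_mulVec, dotProduct_sub, smul_eq_mul, dNormAdj]
  ring

lemma dLap_posSemidef (hA : ∀ x y, 0 ≤ A x y) (hEuler : ∀ x, (∑ y, A x y) = ∑ y, A y x)
    (hdegpos : ∀ x, 0 < ddeg A x) : (dLap A).PosSemidef := by
  refine .of_dotProduct_mulVec_nonneg ?_ fun f => ?_
  · rw [IsHermitian, conjTranspose_eq_transpose_of_trivial, dLap, transpose_smul, transpose_add,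
      transpose_transpose, add_comm]
  · set g := dNormAdj A *ᵥ f
    have hsq : 0 ≤ (f - g) ⬝ᵥ (f - g) := dotProduct_self_star_nonneg _
    have hcontr := dotProduct_self_dNormAdj_mulVec_le hA hEuler hdegpos f
    rw [star_trivial, dotProduct_dLap_mulVec]
    simp only [sub_dotProduct, dotProduct_sub, dotProduct_comm g f] at hsq
    linarith

lemma dLap_mulVec_dphi (hEuler : ∀ x, (∑ y, A x y) = ∑ y, A y x)
    (hdegpos : ∀ x, 0 < ddeg A x) : dLap A *ᵥ dphi A = 0 := by
  have hdegpos' : ∀ x, 0 < ddeg Aᵀ x := by rwa [ddeg_transpose hEuler]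
  have hvecL : dvecL A *ᵥ (fun x => √(ddeg A x)) = 0 := by
    rw [dvecL, sub_mulVec, one_mulVec, ← dNormAdj, dNormAdj_mulVec_sqrt_ddeg hdegpos, sub_self]
  have hvecLT : (dvecL A)ᵀ *ᵥ (fun x => √(ddeg A x)) = 0 := by
    have h := dNormAdj_mulVec_sqrt_ddeg hdegpos'
    rw [ddeg_transpose hEuler, ← dNormAdj_transpose hEuler] at h
    rw [dvecL, transpose_sub, transpose_one, sub_mulVec, one_mulVec, ← dNormAdj, h, sub_self]
  rw [dphi_eq_smul, mulVec_smul, dLap, smul_mulVec, add_mulVec, hvecL, hvecLT]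
  simp

lemma dLalpha_mulVec (α : ℝ) (f : V → ℝ) :
    dLalpha A α *ᵥ f = α • f + (1 - α) • (dNormAdj A *ᵥ f) := by
  rw [dLalpha, dvecL, sub_mulVec, one_mulVec, smul_mulVec, sub_mulVec, one_mulVec, ← dNormAdj]
  module

lemma dotProduct_self_dLalpha_mulVec_le (hA : ∀ x y, 0 ≤ A x y)
    (hEuler : ∀ x, (∑ y, A x y) = ∑ y, A y x) (hdegpos : ∀ x, 0 < ddeg A x) {α : ℝ}
    (hα0 : 0 ≤ α) (hα1 : α ≤ 1) {t : ℝ} {f : V → ℝ}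
    (ht : t * (f ⬝ᵥ f) ≤ f ⬝ᵥ (dLap A *ᵥ f)) :
    (dLalpha A α *ᵥ f) ⬝ᵥ (dLalpha A α *ᵥ f) ≤ (1 - 2 * α * (1 - α) * t) * (f ⬝ᵥ f) := by
  set g := dNormAdj A *ᵥ f
  have hexpand : (α • f + (1 - α) • g) ⬝ᵥ (α • f + (1 - α) • g)
      = α ^ 2 * (f ⬝ᵥ f) + 2 * α * (1 - α) * (f ⬝ᵥ g) + (1 - α) ^ 2 * (g ⬝ᵥ g) := by
    simp only [add_dotProduct, dotProduct_add, smul_dotProduct, dotProduct_smul, smul_eq_mul,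
      dotProduct_comm g f]
    ring
  have hquad := dotProduct_dLap_mulVec (A := A) f
  have hcontr := dotProduct_self_dNormAdj_mulVec_le hA hEuler hdegpos f
  rw [dLalpha_mulVec, hexpand]
  nlinarith [mul_nonneg (mul_nonneg hα0 (sub_nonneg.mpr hα1)) (sub_nonneg.mpr ht),
    mul_nonneg (sq_nonneg (1 - α)) (sub_nonneg.mpr hcontr)]

end Digraph

/-- `σ_α ≤ √(1 - 2α(1-α)λ₁)` for a Eulerian directed graph. -/
theorem stmt_6 {V : Type*} [Fintype V] [DecidableEq V]
    (A : Matrix V V ℝ)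
    (h01 : ∀ x y, A x y = 0 ∨ A x y = 1)
    (hEuler : ∀ x, (∑ y, A x y) = ∑ y, A y x)
    (hdegpos : ∀ x, 0 < ddeg A x)
    (n : ℕ) (hn2 : 2 ≤ n)
    (μ : Fin n → ℝ) (hμ : IsEigenSeq (dLap A) μ)
    (α : ℝ) (hα0 : 0 ≤ α) (hα1 : α ≤ 1)
    (σα : ℝ) (hσα : IsGreatest (sigmaSet A α) σα) :
    σα ≤ Real.sqrt (1 - 2 * α * (1 - α) * μ ⟨1, by omega⟩) := by
  obtain ⟨f, hf0, horth, rfl⟩ := hσα.1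
  have : Nonempty V := let ⟨x, _⟩ := Function.ne_iff.mp hf0; ⟨x⟩
  have hA : ∀ x y, 0 ≤ A x y := fun x y => (h01 x y).elim (·.ge) (·.symm ▸ zero_le_one)
  have hgap := (dLap_posSemidef hA hEuler hdegpos).eigenSeq_one_mul_dotProduct_self_le hμ
    (by omega) (dphi_ne_zero hdegpos) (dLap_mulVec_dphi hEuler hdegpos) horth
  have hbound := dotProduct_self_dLalpha_mulVec_le hA hEuler hdegpos hα0 hα1 hgap
  have hf : 0 < f ⬝ᵥ f :=
    (dotProduct_self_star_nonneg f).lt_of_ne (Ne.symm (dotProduct_self_eq_zero.not.mpr hf0))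
  rw [euclNorm_eq_sqrt_dotProduct, euclNorm_eq_sqrt_dotProduct, div_le_iff₀ (Real.sqrt_pos.mpr hf),
    ← Real.sqrt_mul' _ hf.le]
  exact Real.sqrt_le_sqrt hbound
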